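/- arXiv:1602.04474 — 4 statements merged into one kernel-verified Lean document; each statement's English description precedes it below -/
import Mathlib

section
/- (Cordes inequality) Let A, B be bounded self-adjoint positive semidefinite linear operators on a separable Hilbert space H and let 0 ≤ s ≤ 1. Then ‖AˢBˢ‖ ≤ ‖AB‖ˢ, where ‖·‖ denotes the operator norm and Aˢ is defined by the continuous functional calculus. -/
/-!
Put `F x = ‖aˣ bˣ‖`. With `u = (s + t) / 2`, the C⋆-identity gives `F u ^ 2 = ‖bᵘaᵗ · aˢbᵘ‖`. This
product is `star (aᵘbᵘ) * (aᵘbᵘ)`, hence self-adjoint, so its norm is its spectral radius, which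
does not change when the two factors are swapped; thus `F u ^ 2 ≤ ‖aˢbˢ · bᵗaᵗ‖ ≤ F s * F t`.
A bounded nonnegative function on `[0, 1]` with this midpoint log-convexity and `F 0 ≤ 1` satisfies
`F x ≤ F 1 ^ x`: for `N ≥ F 1` the ratio `G x = F x / N ^ x` has `G x ^ 2 ≤ G (2x mod 1)`, so all
the powers `G x ^ 2 ^ n` stay bounded and `G ≤ 1`.
-/

open Set
open scoped ENNReal

lemma Real.rpow_le_max_one {b x : ℝ} (hb : 0 ≤ b) (hx : x ∈ Icc (0 : ℝ) 1) : b ^ x ≤ max 1 b := by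
  rcases le_total b 1 with hb1 | hb1
  · exact (Real.rpow_le_one hb hb1 hx.1).trans (le_max_left _ _)
  · calc b ^ x ≤ b ^ (1 : ℝ) := Real.rpow_le_rpow_of_exponent_le hb1 hx.2
      _ = b := Real.rpow_one b
      _ ≤ max 1 b := le_max_right _ _

lemma le_one_of_sq_le_of_bddAbove {α : Type*} {S : Set α} {G : α → ℝ} (hbdd : BddAbove (G '' S))
    (hsq : ∀ x ∈ S, ∃ y ∈ S, G x ^ 2 ≤ G y) {x : α} (hx : x ∈ S) : G x ≤ 1 := by
  obtain ⟨C, hC⟩ := hbdd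
  have hpow : ∀ n : ℕ, ∀ x ∈ S, G x ^ 2 ^ n ≤ C := by
    intro n
    induction n with
    | zero => simpa using fun x hx => hC (mem_image_of_mem G hx)
    | succ n ih =>
      intro x hx
      obtain ⟨y, hy, hxy⟩ := hsq x hx
      calc G x ^ 2 ^ (n + 1) = (G x ^ 2) ^ 2 ^ n := by rw [pow_succ', pow_mul]
        _ ≤ G y ^ 2 ^ n := pow_le_pow_left₀ (sq_nonneg _) hxy _
        _ ≤ C := ih y hy
  by_contra! h
  obtain ⟨n, hn⟩ := pow_unbounded_of_one_lt C h
  have : G x ^ n ≤ G x ^ 2 ^ n := pow_le_pow_right₀ h.le Nat.lt_two_pow_self.le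
  linarith [hpow n x hx]

lemma le_rpow_of_midpoint_sq_le_mul_of_le {F : ℝ → ℝ} (hF : ∀ x ∈ Icc (0 : ℝ) 1, 0 ≤ F x)
    (hF0 : F 0 ≤ 1)
    (hmid : ∀ s ∈ Icc (0 : ℝ) 1, ∀ t ∈ Icc (0 : ℝ) 1, F ((s + t) / 2) ^ 2 ≤ F s * F t)
    (hbdd : BddAbove (F '' Icc 0 1)) {N : ℝ} (hN : 0 < N) (hN1 : F 1 ≤ N) {x : ℝ}
    (hx : x ∈ Icc (0 : ℝ) 1) : F x ≤ N ^ x := by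
  suffices F x / N ^ x ≤ 1 from (div_le_one (Real.rpow_pos_of_pos hN x)).mp this
  refine le_one_of_sq_le_of_bddAbove (S := Icc 0 1) (G := fun y => F y / N ^ y) ?_ ?_ hx
  · obtain ⟨C, hC⟩ := hbdd
    refine ⟨C * max 1 N⁻¹, forall_mem_image.mpr fun y hy => ?_⟩
    rw [div_eq_mul_inv, ← Real.inv_rpow hN.le]
    exact mul_le_mul (hC (mem_image_of_mem F hy)) (Real.rpow_le_max_one (by positivity) hy)
      (by positivity) ((hF y hy).trans (hC (mem_image_of_mem F hy)))
  · intro y hy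
    have hsq : (F y / N ^ y) ^ 2 = F y ^ 2 / N ^ (2 * y) := by
      rw [div_pow, mul_comm, Real.rpow_mul hN.le, Real.rpow_two]
    rcases le_total y (1 / 2) with hy2 | hy2
    · have h2y : 2 * y ∈ Icc (0 : ℝ) 1 := ⟨by linarith [hy.1], by linarith⟩
      refine ⟨2 * y, h2y, ?_⟩
      have key := hmid 0 ⟨le_rfl, zero_le_one⟩ (2 * y) h2y
      rw [zero_add, mul_div_cancel_left₀ _ two_ne_zero] at key
      rw [hsq]
      gcongr
      exact key.trans (mul_le_of_le_one_left (hF _ h2y) hF0)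
    · have h2y : 2 * y - 1 ∈ Icc (0 : ℝ) 1 := ⟨by linarith, by linarith [hy.2]⟩
      refine ⟨2 * y - 1, h2y, ?_⟩
      have key := hmid (2 * y - 1) h2y 1 ⟨zero_le_one, le_rfl⟩
      rw [show (2 * y - 1 + 1) / 2 = y by ring] at key
      rw [hsq, Real.rpow_sub_one hN.ne', div_div_eq_mul_div]
      gcongr
      exact key.trans (mul_le_mul_of_nonneg_left hN1 (hF _ h2y))

lemma le_rpow_of_midpoint_sq_le_mul {F : ℝ → ℝ} (hF : ∀ x ∈ Icc (0 : ℝ) 1, 0 ≤ F x)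
    (hF0 : F 0 ≤ 1)
    (hmid : ∀ s ∈ Icc (0 : ℝ) 1, ∀ t ∈ Icc (0 : ℝ) 1, F ((s + t) / 2) ^ 2 ≤ F s * F t)
    (hbdd : BddAbove (F '' Icc 0 1)) {x : ℝ} (hx : x ∈ Icc (0 : ℝ) 1) : F x ≤ F 1 ^ x := by
  rcases hx.1.eq_or_lt with rfl | hx0
  · simpa using hF0
  refine le_of_forall_gt_imp_ge_of_dense fun c hc => ?_
  have hF1 := hF 1 ⟨zero_le_one, le_rfl⟩
  have hc0 : 0 < c := (Real.rpow_nonneg hF1 x).trans_lt hc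
  calc F x ≤ (c ^ x⁻¹) ^ x :=
        le_rpow_of_midpoint_sq_le_mul_of_le hF hF0 hmid hbdd (Real.rpow_pos_of_pos hc0 _)
          ((Real.lt_rpow_inv_iff_of_pos hF1 hc0.le hx0).mpr hc).le hx
    _ = c := Real.rpow_inv_rpow hc0.le hx0.ne'

lemma spectralRadius_mul_comm {𝕜 B : Type*} [NormedField 𝕜] [Ring B] [Algebra 𝕜 B] (x y : B) :
    spectralRadius 𝕜 (x * y) = spectralRadius 𝕜 (y * x) := by
  suffices h : ∀ x y : B, spectralRadius 𝕜 (x * y) ≤ spectralRadius 𝕜 (y * x) from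
    le_antisymm (h x y) (h y x)
  intro x y
  refine iSup₂_le fun k hk => ?_
  rcases eq_or_ne k 0 with rfl | hk0
  · simp
  · have hk' : k ∈ spectrum 𝕜 (y * x) \ {0} :=
      spectrum.nonzero_mul_comm (𝕜 := 𝕜) x y ▸ ⟨hk, hk0⟩
    exact le_iSup₂ (f := fun k (_ : k ∈ spectrum 𝕜 (y * x)) => (‖k‖₊ : ℝ≥0∞)) k hk'.1

section CStarAlgebra

variable {A : Type*} [CStarAlgebra A]

lemma IsSelfAdjoint.norm_mul_le_norm_mul_comm {x y : A} (h : IsSelfAdjoint (x * y)) :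
    ‖x * y‖ ≤ ‖y * x‖ := by
  nontriviality A
  have := (spectralRadius_mul_comm (𝕜 := ℂ) x y).trans_le (spectrum.spectralRadius_le_nnnorm _)
  rw [h.spectralRadius_eq_nnnorm] at this
  exact_mod_cast this

variable [PartialOrder A] [StarOrderedRing A]

lemma CFC.rpow_add_of_nonneg (a : A) {x y : ℝ} (hx : 0 ≤ x) (hy : 0 ≤ y) :
    a ^ (x + y) = a ^ x * a ^ y := by
  simp only [CFC.rpow_def]
  rw [← cfc_mul _ _ a (NNReal.continuous_rpow_const hx).continuousOn
    (NNReal.continuous_rpow_const hy).continuousOn]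
  exact cfc_congr fun z _ => NNReal.rpow_add_of_nonneg z hx hy

lemma CFC.norm_rpow_le_max_one {a : A} (ha : 0 ≤ a) {x : ℝ} (hx : x ∈ Icc (0 : ℝ) 1) :
    ‖a ^ x‖ ≤ max 1 ‖a‖ := by
  rcases hx.1.eq_or_lt with rfl | hx0
  · nontriviality A
    simp [CFC.rpow_zero a ha]
  · rw [CFC.norm_rpow a hx0 ha]
    exact Real.rpow_le_max_one (norm_nonneg a) hx

lemma CFC.norm_rpow_mul_rpow_midpoint_sq_le {a b : A} {s t : ℝ} (hs : 0 ≤ s) (ht : 0 ≤ t) :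
    ‖a ^ ((s + t) / 2) * b ^ ((s + t) / 2)‖ ^ 2 ≤ ‖a ^ s * b ^ s‖ * ‖a ^ t * b ^ t‖ := by
  set u := (s + t) / 2 with hu_def
  have hu : 0 ≤ u := by positivity
  have hau : a ^ u * a ^ u = a ^ t * a ^ s := by
    rw [← rpow_add_of_nonneg a hu hu, hu_def, add_halves, add_comm, rpow_add_of_nonneg a ht hs]
  have hbu : b ^ u * b ^ u = b ^ s * b ^ t := by
    rw [← rpow_add_of_nonneg b hu hu, hu_def, add_halves, rpow_add_of_nonneg b hs ht]
  have hsa : ∀ (c : A) (r : ℝ), star (c ^ r) = c ^ r := fun _ _ =>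
    (IsSelfAdjoint.of_nonneg rpow_nonneg).star_eq
  set x := a ^ u * b ^ u
  have hstar : star x * x = (b ^ u * a ^ t) * (a ^ s * b ^ u) := by
    rw [star_mul, hsa, hsa]
    calc b ^ u * a ^ u * (a ^ u * b ^ u) = b ^ u * (a ^ u * a ^ u) * b ^ u := by
          simp only [mul_assoc]
      _ = _ := by rw [hau]; simp only [mul_assoc]
  calc ‖x‖ ^ 2 = ‖star x * x‖ := by rw [sq, CStarRing.norm_star_mul_self]
    _ = ‖(b ^ u * a ^ t) * (a ^ s * b ^ u)‖ := by rw [hstar]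
    _ ≤ ‖(a ^ s * b ^ u) * (b ^ u * a ^ t)‖ :=
        (hstar ▸ IsSelfAdjoint.star_mul_self x).norm_mul_le_norm_mul_comm
    _ = ‖(a ^ s * b ^ s) * (b ^ t * a ^ t)‖ := by
        rw [mul_assoc, ← mul_assoc (b ^ u), hbu]
        simp only [mul_assoc]
    _ ≤ ‖a ^ s * b ^ s‖ * ‖b ^ t * a ^ t‖ := norm_mul_le _ _
    _ = ‖a ^ s * b ^ s‖ * ‖a ^ t * b ^ t‖ := by
        rw [← norm_star (a ^ t * b ^ t), star_mul, hsa, hsa]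

theorem CFC.norm_rpow_mul_rpow_le {a b : A} (ha : 0 ≤ a) (hb : 0 ≤ b) {s : ℝ}
    (hs : s ∈ Icc (0 : ℝ) 1) : ‖a ^ s * b ^ s‖ ≤ ‖a * b‖ ^ s := by
  have hF0 : ‖a ^ (0 : ℝ) * b ^ (0 : ℝ)‖ ≤ 1 := by
    nontriviality A
    simp [CFC.rpow_zero a ha, CFC.rpow_zero b hb]
  have hbdd : BddAbove ((fun x : ℝ => ‖a ^ x * b ^ x‖) '' Icc 0 1) :=
    ⟨max 1 ‖a‖ * max 1 ‖b‖, forall_mem_image.mpr fun x hx => (norm_mul_le _ _).trans <|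
      mul_le_mul (norm_rpow_le_max_one ha hx) (norm_rpow_le_max_one hb hx) (norm_nonneg _)
        (by positivity)⟩
  simpa [CFC.rpow_one a ha, CFC.rpow_one b hb] using
    le_rpow_of_midpoint_sq_le_mul (F := fun x : ℝ => ‖a ^ x * b ^ x‖) (fun _ _ => norm_nonneg _)
      hF0 (fun s hs t ht => norm_rpow_mul_rpow_midpoint_sq_le hs.1 ht.1) hbdd hs

end CStarAlgebra

theorem stmt_3_general {H : Type*} [NormedAddCommGroup H] [InnerProductSpace ℂ H] [CompleteSpace H]
    (A B : H →L[ℂ] H) (hA : A.IsPositive) (hB : B.IsPositive)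
    (s : ℝ) (hs0 : 0 ≤ s) (hs1 : s ≤ 1) :
    ‖CFC.rpow A s * CFC.rpow B s‖ ≤ ‖A * B‖ ^ s :=
  CFC.norm_rpow_mul_rpow_le (A.nonneg_iff_isPositive.mpr hA) (B.nonneg_iff_isPositive.mpr hB)
    ⟨hs0, hs1⟩

/-- Cordes inequality: for bounded self-adjoint positive operators `A, B` on a separable
Hilbert space and `0 ≤ s ≤ 1`, `‖A^s B^s‖ ≤ ‖A B‖^s`. -/
theorem stmt_3 {H : Type*} [NormedAddCommGroup H] [InnerProductSpace ℂ H] [CompleteSpace H]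
    [TopologicalSpace.SeparableSpace H]
    (A B : H →L[ℂ] H) (hA : A.IsPositive) (hB : B.IsPositive)
    (hAsa : IsSelfAdjoint A) (hBsa : IsSelfAdjoint B)
    (s : ℝ) (hs0 : 0 ≤ s) (hs1 : s ≤ 1) :
    ‖CFC.rpow A s * CFC.rpow B s‖ ≤ ‖A * B‖ ^ s :=
  stmt_3_general A B hA hB s hs0 hs1
end

section
/- (Interpolation inequality) Let H, K be separable Hilbert spaces, X : H → K a bounded linear operator, and A : H → H a bounded self-adjoint positive semidefinite operator. Then for every σ ∈ [0,1], ‖X Aᵠ‖ ≤ ‖X‖^{1−σ} ‖XA‖^{σ} (with Aᵠ = A^σ the operator power), where ‖·‖ is the operator norm. -/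
/-!
Passing to adjoints, `‖X A^σ‖ = ‖A^σ X*‖`, so it suffices to prove the Hölder–McCarthy inequality
`‖A^σ u‖ ≤ ‖A u‖^σ ‖u‖^(1-σ)` for every vector `u`. Concavity of `t ↦ t^σ` gives the tangent-line
bound `t^σ ≤ σ l^(σ-1) t + (1-σ) l^σ` for every `l > 0`; the functional calculus turns it into the
operator inequality `(A²)^σ ≤ σ l^(σ-1) A² + (1-σ) l^σ`, whose quadratic form at `u` reads
`‖A^σ u‖² ≤ σ l^(σ-1) ‖A u‖² + (1-σ) l^σ ‖u‖²`. Choosing `l = ‖A u‖² / ‖u‖²` gives the claim.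
-/

open scoped InnerProductSpace

theorem Real.rpow_le_tangent_line {t l σ : ℝ} (ht : 0 ≤ t) (hl : 0 < l) (hσ0 : 0 ≤ σ)
    (hσ1 : σ ≤ 1) : t ^ σ ≤ σ * l ^ (σ - 1) * t + (1 - σ) * l ^ σ := by
  have bernoulli := rpow_one_add_le_one_add_mul_self (s := t / l - 1)
    (by linarith [div_nonneg ht hl.le]) hσ0 hσ1
  have hscale : t ^ σ = l ^ σ * (1 + (t / l - 1)) ^ σ := by
    rw [add_sub_cancel, Real.div_rpow ht hl.le, mul_div_cancel₀ _ (by positivity)]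
  calc t ^ σ ≤ l ^ σ * (1 + σ * (t / l - 1)) := by
        rw [hscale]
        gcongr
    _ = σ * l ^ (σ - 1) * t + (1 - σ) * l ^ σ := by
        rw [Real.rpow_sub_one hl.ne']
        field_simp
        ring

theorem Real.le_rpow_mul_rpow_of_forall_le_tangent_line {x a b σ : ℝ} (ha : 0 ≤ a) (hb : 0 < b)
    (hσ0 : 0 ≤ σ) (hσ1 : σ ≤ 1)
    (h : ∀ l > 0, x ≤ σ * l ^ (σ - 1) * a + (1 - σ) * l ^ σ * b) :
    x ≤ a ^ σ * b ^ (1 - σ) := by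
  rcases hσ0.eq_or_lt with rfl | hσ0
  · simpa using h 1 one_pos
  rcases ha.eq_or_lt with rfl | ha
  · simp only [mul_zero, zero_add] at h
    have hcont : ContinuousAt (fun l : ℝ => (1 - σ) * l ^ σ * b) 0 :=
      ((Real.continuousAt_rpow_const 0 σ (Or.inr hσ0.le)).const_mul _).mul_const _
    have hlim := hcont.tendsto.mono_left (nhdsWithin_le_nhds (s := Set.Ioi 0))
    simp only [Real.zero_rpow hσ0.ne', mul_zero, zero_mul] at hlim ⊢
    exact ge_of_tendsto hlim (eventually_nhdsWithin_of_forall h)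
  · -- `l = a / b` minimises the right-hand side of `h`
    have hab : 0 < a / b := div_pos ha hb
    calc x ≤ σ * (a / b) ^ (σ - 1) * a + (1 - σ) * (a / b) ^ σ * b := h _ hab
      _ = a ^ σ * b ^ (1 - σ) := by
        rw [Real.rpow_sub_one hab.ne', Real.div_rpow ha.le hb.le, Real.rpow_sub hb,
          Real.rpow_one]
        field_simp
        ring

section CFC

variable {A : Type*} [PartialOrder A] [Ring A] [StarRing A] [TopologicalSpace A]
  [IsSemitopologicalRing A] [T2Space A] [StarOrderedRing A] [Algebra ℝ A]
  [ContinuousFunctionalCalculus ℝ A IsSelfAdjoint] [NonnegSpectrumClass ℝ A]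

theorem CFC.rpow_le_tangent_line {a : A} (ha : 0 ≤ a) {l σ : ℝ} (hl : 0 < l) (hσ0 : 0 ≤ σ)
    (hσ1 : σ ≤ 1) : a ^ σ ≤ (σ * l ^ (σ - 1)) • a + ((1 - σ) * l ^ σ) • (1 : A) := by
  have haffine : (σ * l ^ (σ - 1)) • a + ((1 - σ) * l ^ σ) • (1 : A)
      = cfc (fun x : ℝ => σ * l ^ (σ - 1) * x + (1 - σ) * l ^ σ) a := by
    rw [cfc_add .., cfc_const_mul .., cfc_id' .., cfc_const .., Algebra.algebraMap_eq_smul_one]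
  rw [CFC.rpow_eq_cfc_real ha, haffine]
  exact cfc_mono fun x hx =>
    Real.rpow_le_tangent_line (spectrum_nonneg_of_nonneg ha hx) hl hσ0 hσ1

end CFC

namespace ContinuousLinearMap

open RCLike

section RCLike

variable {𝕜 E F : Type*} [RCLike 𝕜] [NormedAddCommGroup E] [InnerProductSpace 𝕜 E]
  [NormedAddCommGroup F] [InnerProductSpace 𝕜 F]

theorem re_inner_apply_self_le_of_le {S T : E →L[𝕜] E} (h : S ≤ T) (x : E) :
    re ⟪S x, x⟫_𝕜 ≤ re ⟪T x, x⟫_𝕜 := by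
  have := ((le_def S T).mp h).re_inner_nonneg_left x
  rwa [sub_apply, inner_sub_left, map_sub, sub_nonneg] at this

variable [CompleteSpace E] [CompleteSpace F]

theorem norm_apply_sq_eq_re_inner_sq_apply {S : E →L[𝕜] E} (hS : IsSelfAdjoint S) (x : E) :
    ‖S x‖ ^ 2 = re ⟪(S ^ 2) x, x⟫_𝕜 := by
  rw [apply_norm_sq_eq_inner_adjoint_left, hS.adjoint_eq, sq, mul_def]

theorem norm_comp_eq_norm_comp_adjoint (X : E →L[𝕜] F) {S : E →L[𝕜] E} (hS : IsSelfAdjoint S) :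
    ‖X ∘L S‖ = ‖S ∘L adjoint X‖ := by
  rw [← adjoint.norm_map, adjoint_comp, hS.adjoint_eq]

end RCLike

variable {E F : Type*} [NormedAddCommGroup E] [InnerProductSpace ℂ E] [CompleteSpace E]
  [NormedAddCommGroup F] [InnerProductSpace ℂ F]

theorem norm_rpow_apply_sq_le_tangent_line {A : E →L[ℂ] E} (hA : 0 ≤ A) {σ l : ℝ} (hσ0 : 0 ≤ σ)
    (hσ1 : σ ≤ 1) (hl : 0 < l) (u : E) :
    ‖(A ^ σ) u‖ ^ 2 ≤ σ * l ^ (σ - 1) * ‖A u‖ ^ 2 + (1 - σ) * l ^ σ * ‖u‖ ^ 2 := by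
  have hA2 : A ^ (2 : ℝ) = A ^ 2 := by rw [← Nat.cast_ofNat, CFC.rpow_natCast A 2]
  have hsq : (A ^ 2) ^ σ = (A ^ σ) ^ 2 := by
    rw [← hA2, CFC.rpow_rpow_of_exponent_nonneg A 2 σ zero_le_two hσ0, mul_comm,
      ← CFC.rpow_rpow_of_exponent_nonneg A σ 2 hσ0 zero_le_two, ← Nat.cast_ofNat,
      CFC.rpow_natCast _ 2]
  have hle := CFC.rpow_le_tangent_line (CFC.rpow_nonneg (a := A) (y := 2)) hl hσ0 hσ1
  rw [hA2, hsq] at hle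
  calc ‖(A ^ σ) u‖ ^ 2 = re ⟪((A ^ σ) ^ 2) u, u⟫_ℂ :=
        norm_apply_sq_eq_re_inner_sq_apply CFC.rpow_nonneg.isSelfAdjoint u
    _ ≤ re ⟪(((σ * l ^ (σ - 1)) • A ^ 2 + ((1 - σ) * l ^ σ) • 1 : E →L[ℂ] E)) u, u⟫_ℂ :=
        re_inner_apply_self_le_of_le hle u
    _ = σ * l ^ (σ - 1) * ‖A u‖ ^ 2 + (1 - σ) * l ^ σ * ‖u‖ ^ 2 := by
        rw [norm_apply_sq_eq_re_inner_sq_apply hA.isSelfAdjoint]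
        simp only [add_apply, smul_apply, one_apply_eq_self, real_smul_eq_coe_smul (K := ℂ),
          inner_add_left, inner_smul_left, conj_ofReal, map_add, re_ofReal_mul,
          inner_self_eq_norm_sq]

theorem norm_rpow_apply_le {A : E →L[ℂ] E} (hA : 0 ≤ A) {σ : ℝ} (hσ0 : 0 ≤ σ) (hσ1 : σ ≤ 1)
    (u : E) : ‖(A ^ σ) u‖ ≤ ‖A u‖ ^ σ * ‖u‖ ^ (1 - σ) := by
  rcases eq_or_ne u 0 with rfl | hu
  · simp only [map_zero, norm_zero]
    positivity
  have hsq : ‖(A ^ σ) u‖ ^ 2 ≤ (‖A u‖ ^ 2) ^ σ * (‖u‖ ^ 2) ^ (1 - σ) :=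
    Real.le_rpow_mul_rpow_of_forall_le_tangent_line (by positivity) (by positivity) hσ0 hσ1
      fun l hl => norm_rpow_apply_sq_le_tangent_line hA hσ0 hσ1 hl u
  rw [← Real.rpow_pow_comm (norm_nonneg _), ← Real.rpow_pow_comm (norm_nonneg _), ← mul_pow]
    at hsq
  exact (pow_le_pow_iff_left₀ (norm_nonneg _) (by positivity) two_ne_zero).mp hsq

theorem norm_rpow_comp_le {A : E →L[ℂ] E} (hA : 0 ≤ A) {σ : ℝ} (hσ0 : 0 ≤ σ) (hσ1 : σ ≤ 1)
    (T : F →L[ℂ] E) : ‖(A ^ σ) ∘L T‖ ≤ ‖A ∘L T‖ ^ σ * ‖T‖ ^ (1 - σ) := by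
  refine opNorm_le_bound _ (by positivity) fun y => ?_
  calc ‖(A ^ σ) (T y)‖ ≤ ‖A (T y)‖ ^ σ * ‖T y‖ ^ (1 - σ) := norm_rpow_apply_le hA hσ0 hσ1 _
    _ ≤ (‖A ∘L T‖ * ‖y‖) ^ σ * (‖T‖ * ‖y‖) ^ (1 - σ) := by
        gcongr
        · exact (A ∘L T).le_opNorm y
        · exact T.le_opNorm y
    _ = ‖A ∘L T‖ ^ σ * ‖T‖ ^ (1 - σ) * ‖y‖ := by
        rw [Real.mul_rpow (by positivity) (by positivity),
          Real.mul_rpow (by positivity) (by positivity), mul_mul_mul_comm,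
          ← Real.rpow_add' (norm_nonneg _) (by norm_num), add_sub_cancel, Real.rpow_one]

end ContinuousLinearMap

theorem stmt_4_general {H K : Type*}
    [NormedAddCommGroup H] [InnerProductSpace ℂ H] [CompleteSpace H]
    [NormedAddCommGroup K] [InnerProductSpace ℂ K] [CompleteSpace K]
    (X : H →L[ℂ] K) (A : H →L[ℂ] H) (hA : A.IsPositive)
    (σ : ℝ) (hσ0 : 0 ≤ σ) (hσ1 : σ ≤ 1) :
    ‖X ∘L CFC.rpow A σ‖ ≤ ‖X‖ ^ (1 - σ) * ‖X ∘L A‖ ^ σ := by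
  have hA' : 0 ≤ A := (ContinuousLinearMap.nonneg_iff_isPositive A).mpr hA
  rw [CFC.rpow_eq_pow,
    X.norm_comp_eq_norm_comp_adjoint CFC.rpow_nonneg.isSelfAdjoint,
    X.norm_comp_eq_norm_comp_adjoint hA'.isSelfAdjoint,
    ← ContinuousLinearMap.adjoint.norm_map X, mul_comm]
  exact ContinuousLinearMap.norm_rpow_comp_le hA' hσ0 hσ1 _

/-- Interpolation inequality: for `X : H →L K` bounded and `A` bounded self-adjoint positive
on `H`, `‖X A^σ‖ ≤ ‖X‖^(1-σ) ‖X A‖^σ` for all `σ ∈ [0,1]`. -/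
theorem stmt_4 {H K : Type*}
    [NormedAddCommGroup H] [InnerProductSpace ℂ H] [CompleteSpace H]
    [TopologicalSpace.SeparableSpace H]
    [NormedAddCommGroup K] [InnerProductSpace ℂ K] [CompleteSpace K]
    [TopologicalSpace.SeparableSpace K]
    (X : H →L[ℂ] K) (A : H →L[ℂ] H) (hA : A.IsPositive) (hAsa : IsSelfAdjoint A)
    (σ : ℝ) (hσ0 : 0 ≤ σ) (hσ1 : σ ≤ 1) :
    ‖X ∘L CFC.rpow A σ‖ ≤ ‖X‖ ^ (1 - σ) * ‖X ∘L A‖ ^ σ :=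
  stmt_4_general X A hA σ hσ0 hσ1
end

section
/- Let H be a separable Hilbert space, A, B bounded self-adjoint positive linear operators on H, and λ > 0. Define β = λ_max[(B+λI)^{−1/2}(B−A)(B+λI)^{−1/2}], the supremum of ⟨f, (B+λI)^{−1/2}(B−A)(B+λI)^{−1/2} f⟩ over unit vectors f. Then β < 1 and ‖(A+λI)^{−1/2}(B+λI)^{1/2}‖ ≤ (1−β)^{−1/2}. -/
/-!
Put `t = B + λ`, `s = A + λ` and `r = t^{-1/2}`. Since `B - A = t - s` and `r t r = 1`, the
operator `r (B - A) r` equals `1 - r s r`, so conjugating by the unit `t^{1/2}` shows that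
`r (B - A) r ≤ β` is equivalent to `(1 - β) t ≤ s`. As `B ≤ ‖B‖`, this holds with
`β = ‖B‖ / (‖B‖ + λ) < 1`, which bounds `λ_max`. With `β = λ_max` itself it gives
`s^{-1/2} t s^{-1/2} ≤ (1 - β)⁻¹`, i.e. `x⋆x ≤ (1 - β)⁻¹` for `x = t^{1/2} s^{-1/2}`, and the
C⋆-identity turns this into the norm bound.
-/

/-- `λ_max T = sup_{‖f‖ ≤ 1} ⟨f, T f⟩` (real part of the quadratic form). -/
noncomputable def lamMax {H : Type*} [NormedAddCommGroup H] [InnerProductSpace ℂ H]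
    (T : H →L[ℂ] H) : ℝ :=
  ⨆ f : { f : H // ‖f‖ ≤ 1 }, T.reApplyInnerSelf (f : H)

theorem IsUnit.star_left_conjugate_le_conjugate_iff {R : Type*} [Ring R] [PartialOrder R]
    [StarRing R] [StarOrderedRing R] {a b c : R} (hc : IsUnit c) :
    star c * a * c ≤ star c * b * c ↔ a ≤ b := by
  refine ⟨fun h => ?_, fun h => star_left_conjugate_le_conjugate h c⟩
  obtain ⟨u, rfl⟩ := hc
  have cancel : ∀ x : R, star (↑u⁻¹ : R) * (star (u : R) * x * u) * ↑u⁻¹ = x := fun x => by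
    rw [← mul_assoc, ← mul_assoc, ← star_mul, Units.mul_inv, star_one, one_mul, mul_assoc,
      Units.mul_inv, mul_one]
  simpa only [cancel] using star_left_conjugate_le_conjugate h (↑u⁻¹ : R)

namespace CFC

variable {A : Type*} [CStarAlgebra A] [PartialOrder A] [StarOrderedRing A]

lemma rpow_neg_half_mul_self_mul_rpow_neg_half {t : A} (ht : IsStrictlyPositive t) :
    t ^ (-(1/2) : ℝ) * t * t ^ (-(1/2) : ℝ) = 1 := by
  rw [← rpow_mul_rpow_neg (1/2) ht]
  congr 1
  nth_rw 2 [← rpow_one t]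
  rw [← rpow_add ht.isUnit]
  norm_num

lemma rpow_half_mul_rpow_half {t : A} (ht : 0 ≤ t) : t ^ (1/2 : ℝ) * t ^ (1/2 : ℝ) = t := by
  rw [← sqrt_eq_rpow, sqrt_mul_sqrt_self t ht]

lemma rpow_neg_half_conjugate_sub_le_iff {t : A} (ht : IsStrictlyPositive t) (s : A) (β : ℝ) :
    t ^ (-(1/2) : ℝ) * (t - s) * t ^ (-(1/2) : ℝ) ≤ algebraMap ℝ A β ↔ (1 - β) • t ≤ s := by
  set r := t ^ (-(1/2) : ℝ)
  have hr : IsSelfAdjoint r := IsSelfAdjoint.of_nonneg rpow_nonneg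
  have hrtr : r * t * r = 1 := rpow_neg_half_mul_self_mul_rpow_neg_half ht
  rw [← (IsStrictlyPositive.rpow t (-(1/2)) ht).isUnit.star_left_conjugate_le_conjugate_iff
      (a := (1 - β) • t) (b := s), hr.star_eq, mul_smul_comm, smul_mul_assoc, hrtr, mul_sub,
    sub_mul, hrtr, Algebra.algebraMap_eq_smul_one, sub_le_comm, sub_smul, one_smul]

lemma norm_rpow_neg_half_mul_rpow_half_le {s t : A} (hs : IsStrictlyPositive s) (ht : 0 ≤ t)
    {c : ℝ} (hc : 0 < c) (h : c • t ≤ s) :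
    ‖s ^ (-(1/2) : ℝ) * t ^ (1/2 : ℝ)‖ ≤ c ^ (-(1/2) : ℝ) := by
  set r := s ^ (-(1/2) : ℝ)
  have hr : IsSelfAdjoint r := IsSelfAdjoint.of_nonneg rpow_nonneg
  have hq : IsSelfAdjoint (t ^ (1/2 : ℝ)) := IsSelfAdjoint.of_nonneg rpow_nonneg
  set x := t ^ (1/2 : ℝ) * r
  have hts : t ≤ c⁻¹ • s := by
    simpa only [inv_smul_smul₀ hc.ne'] using
      smul_le_smul_of_nonneg_left h (_root_.inv_nonneg.2 hc.le)
  have hxx : star x * x ≤ algebraMap ℝ A c⁻¹ :=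
    calc star x * x = r * t * r := by
          rw [star_mul, hr.star_eq, hq.star_eq, mul_assoc r, ← mul_assoc _ _ r,
            rpow_half_mul_rpow_half ht, mul_assoc]
      _ ≤ r * (c⁻¹ • s) * r := hr.conjugate_le_conjugate hts
      _ = algebraMap ℝ A c⁻¹ := by
          rw [mul_smul_comm, smul_mul_assoc, rpow_neg_half_mul_self_mul_rpow_neg_half hs,
            Algebra.algebraMap_eq_smul_one]
  have hx : ‖x‖ ^ 2 ≤ c⁻¹ := by
    rw [sq, ← CStarRing.norm_star_mul_self]
    exact (CStarAlgebra.norm_le_iff_le_algebraMap _ (by positivity)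
      (star_mul_self_nonneg x)).2 hxx
  have hstar : r * t ^ (1/2 : ℝ) = star x := by rw [star_mul, hr.star_eq, hq.star_eq]
  rw [hstar, norm_star, Real.rpow_neg hc.le, ← Real.inv_rpow hc.le, ← Real.sqrt_eq_rpow]
  exact Real.le_sqrt_of_sq_le hx

lemma rpow_neg_half_conjugate_sub_le {a b : A} (ha : 0 ≤ a) (hb : 0 ≤ b) {r : ℝ} (hr : 0 < r) :
    (b + algebraMap ℝ A r) ^ (-(1/2) : ℝ) * (b - a) * (b + algebraMap ℝ A r) ^ (-(1/2) : ℝ) ≤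
      algebraMap ℝ A (‖b‖ / (‖b‖ + r)) := by
  have hnr : 0 < ‖b‖ + r := by positivity
  rw [← add_sub_add_right_eq_sub b a (algebraMap ℝ A r), rpow_neg_half_conjugate_sub_le_iff
    ((isStrictlyPositive_algebraMap hr).nonneg_add hb)]
  have hcoef : 1 - ‖b‖ / (‖b‖ + r) = r / (‖b‖ + r) := by field_simp; ring
  calc (1 - ‖b‖ / (‖b‖ + r)) • (b + algebraMap ℝ A r)
      ≤ (r / (‖b‖ + r)) • algebraMap ℝ A (‖b‖ + r) := by
        rw [hcoef, map_add]
        gcongr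
        exact IsSelfAdjoint.le_algebraMap_norm_self (IsSelfAdjoint.of_nonneg hb)
    _ = algebraMap ℝ A r := by rw [Algebra.smul_def, ← map_mul, div_mul_cancel₀ _ hnr.ne']
    _ ≤ a + algebraMap ℝ A r := le_add_of_nonneg_left ha

end CFC

namespace ContinuousLinearMap

variable {H : Type*} [NormedAddCommGroup H] [InnerProductSpace ℂ H]

lemma reApplyInnerSelf_le_norm_mul_sq (T : H →L[ℂ] H) (x : H) :
    T.reApplyInnerSelf x ≤ ‖T‖ * ‖x‖ ^ 2 :=
  calc T.reApplyInnerSelf x ≤ ‖T x‖ * ‖x‖ := re_inner_le_norm _ _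
    _ ≤ ‖T‖ * ‖x‖ * ‖x‖ := by gcongr; exact T.le_opNorm x
    _ = ‖T‖ * ‖x‖ ^ 2 := by ring

lemma reApplyInnerSelf_algebraMap_sub (T : H →L[ℂ] H) (c : ℝ) (x : H) :
    (algebraMap ℝ (H →L[ℂ] H) c - T).reApplyInnerSelf x = c * ‖x‖ ^ 2 - T.reApplyInnerSelf x := by
  rw [Algebra.algebraMap_eq_smul_one, reApplyInnerSelf_apply, reApplyInnerSelf_apply, sub_apply,
    inner_sub_left, map_sub, smul_apply, one_apply_eq_self, RCLike.real_smul_eq_coe_smul (K := ℂ),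
    inner_smul_real_left, RCLike.smul_re, inner_self_eq_norm_sq]

lemma le_algebraMap_iff_reApplyInnerSelf_le [CompleteSpace H] {T : H →L[ℂ] H}
    (hT : IsSelfAdjoint T) (c : ℝ) :
    T ≤ algebraMap ℝ (H →L[ℂ] H) c ↔ ∀ x, T.reApplyInnerSelf x ≤ c * ‖x‖ ^ 2 := by
  simp only [le_def, isPositive_def', reApplyInnerSelf_algebraMap_sub, sub_nonneg,
    (IsSelfAdjoint.algebraMap (H →L[ℂ] H) (.all c)).sub hT, true_and]

end ContinuousLinearMap

section LamMax

open ContinuousLinearMap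

variable {H : Type*} [NormedAddCommGroup H] [InnerProductSpace ℂ H]

lemma lamMax_le {T : H →L[ℂ] H} {c : ℝ} (hc : 0 ≤ c) (h : T ≤ algebraMap ℝ (H →L[ℂ] H) c) :
    lamMax T ≤ c := by
  refine Real.iSup_le (fun f => ?_) hc
  have hf : T.reApplyInnerSelf f ≤ c * ‖(f : H)‖ ^ 2 := by
    simpa [reApplyInnerSelf_algebraMap_sub] using ((le_def _ _).1 h).2 f
  calc T.reApplyInnerSelf f ≤ c * ‖(f : H)‖ ^ 2 := hf
    _ ≤ c * 1 ^ 2 := by gcongr; exact f.2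
    _ = c := by ring

lemma le_algebraMap_lamMax [CompleteSpace H] {T : H →L[ℂ] H} (hT : IsSelfAdjoint T) :
    T ≤ algebraMap ℝ (H →L[ℂ] H) (lamMax T) := by
  have hbdd : BddAbove (Set.range fun f : { f : H // ‖f‖ ≤ 1 } => T.reApplyInnerSelf f) := by
    refine ⟨‖T‖, ?_⟩
    rintro _ ⟨f, rfl⟩
    calc T.reApplyInnerSelf f ≤ ‖T‖ * ‖(f : H)‖ ^ 2 := T.reApplyInnerSelf_le_norm_mul_sq f
      _ ≤ ‖T‖ * 1 ^ 2 := by gcongr; exact f.2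
      _ = ‖T‖ := by ring
  refine (le_algebraMap_iff_reApplyInnerSelf_le hT _).2 fun x => ?_
  rcases eq_or_ne x 0 with rfl | hx
  · simp [reApplyInnerSelf_apply]
  have hnx : 0 < ‖x‖ := norm_pos_iff.2 hx
  set u : H := ((‖x‖⁻¹ : ℝ) : ℂ) • x
  have hu : ‖u‖ ≤ 1 := by simp [u, norm_smul, hnx.ne']
  have hTu : T.reApplyInnerSelf u = T.reApplyInnerSelf x / ‖x‖ ^ 2 := by
    rw [reApplyInnerSelf_smul]
    simp [div_eq_inv_mul]
  have := le_ciSup hbdd ⟨u, hu⟩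
  rwa [← lamMax, hTu, div_le_iff₀ (by positivity)] at this

end LamMax

theorem stmt_5_general {H : Type*} [NormedAddCommGroup H] [InnerProductSpace ℂ H] [CompleteSpace H]
    (A B : H →L[ℂ] H) (hA : A.IsPositive) (hB : B.IsPositive)
    (lam : ℝ) (hlam : 0 < lam) :
    lamMax (CFC.rpow (B + lam • (1 : H →L[ℂ] H)) (-(1/2) : ℝ) * (B - A) *
        CFC.rpow (B + lam • (1 : H →L[ℂ] H)) (-(1/2) : ℝ)) < 1 ∧
    ‖CFC.rpow (A + lam • (1 : H →L[ℂ] H)) (-(1/2) : ℝ) *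
        CFC.rpow (B + lam • (1 : H →L[ℂ] H)) ((1/2) : ℝ)‖ ≤
      (1 - lamMax (CFC.rpow (B + lam • (1 : H →L[ℂ] H)) (-(1/2) : ℝ) * (B - A) *
        CFC.rpow (B + lam • (1 : H →L[ℂ] H)) (-(1/2) : ℝ))) ^ (-(1/2) : ℝ) := by
  have hA0 : 0 ≤ A := (ContinuousLinearMap.nonneg_iff_isPositive A).2 hA
  have hB0 : 0 ≤ B := (ContinuousLinearMap.nonneg_iff_isPositive B).2 hB
  have hlamPos := isStrictlyPositive_algebraMap (A := H →L[ℂ] H) hlam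
  simp only [CFC.rpow_eq_pow, ← Algebra.algebraMap_eq_smul_one]
  set r := (B + algebraMap ℝ _ lam) ^ (-(1/2) : ℝ)
  set β := lamMax (r * (B - A) * r)
  have hβ : β ≤ ‖B‖ / (‖B‖ + lam) :=
    lamMax_le (by positivity) (CFC.rpow_neg_half_conjugate_sub_le hA0 hB0 hlam)
  have hβ1 : β < 1 := hβ.trans_lt ((div_lt_one (by positivity)).2 (by linarith))
  have hsa : IsSelfAdjoint (r * (B - A) * r) := by
    have := (hB.isSelfAdjoint.sub hA.isSelfAdjoint).conjugate' r
    rwa [(IsSelfAdjoint.of_nonneg CFC.rpow_nonneg : IsSelfAdjoint r).star_eq] at this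
  have hst : (1 - β) • (B + algebraMap ℝ _ lam) ≤ A + algebraMap ℝ _ lam := by
    rw [← CFC.rpow_neg_half_conjugate_sub_le_iff (hlamPos.nonneg_add hB0),
      add_sub_add_right_eq_sub]
    exact le_algebraMap_lamMax hsa
  exact ⟨hβ1, CFC.norm_rpow_neg_half_mul_rpow_half_le (hlamPos.nonneg_add hA0)
    (add_nonneg hB0 hlamPos.nonneg) (sub_pos.2 hβ1) hst⟩

/-- With `β = λ_max((B+λI)^{-1/2}(B-A)(B+λI)^{-1/2})` one has `β < 1` and
`‖(A+λI)^{-1/2}(B+λI)^{1/2}‖ ≤ (1-β)^{-1/2}`. -/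
theorem stmt_5 {H : Type*} [NormedAddCommGroup H] [InnerProductSpace ℂ H] [CompleteSpace H]
    [TopologicalSpace.SeparableSpace H]
    (A B : H →L[ℂ] H) (hA : A.IsPositive) (hB : B.IsPositive)
    (hAsa : IsSelfAdjoint A) (hBsa : IsSelfAdjoint B)
    (lam : ℝ) (hlam : 0 < lam) :
    lamMax (CFC.rpow (B + lam • (1 : H →L[ℂ] H)) (-(1/2) : ℝ) * (B - A) *
        CFC.rpow (B + lam • (1 : H →L[ℂ] H)) (-(1/2) : ℝ)) < 1 ∧
    ‖CFC.rpow (A + lam • (1 : H →L[ℂ] H)) (-(1/2) : ℝ) *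
        CFC.rpow (B + lam • (1 : H →L[ℂ] H)) ((1/2) : ℝ)‖ ≤
      (1 - lamMax (CFC.rpow (B + lam • (1 : H →L[ℂ] H)) (-(1/2) : ℝ) * (B - A) *
        CFC.rpow (B + lam • (1 : H →L[ℂ] H)) (-(1/2) : ℝ))) ^ (-(1/2) : ℝ) :=
  stmt_5_general A B hA hB lam hlam
end

section
/- Let L be a positive self-adjoint bounded operator on a separable Hilbert space, λ > 0, and r ∈ [1/2, 1]. Suppose g ∈ H and set f = L^r g. Then ‖f − L(L+λI)^{−1} f‖ ≤ λ^r ‖g‖. -/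
/-!
Since `L` commutes with `(L + λ)⁻¹`, the error is a function of `L`:
`L^r - L (L + λ)⁻¹ L^r = φ(L)` with `φ(x) = λ x^r / (x + λ)`. By the weighted AM-GM inequality
`x^r λ^(1-r) ≤ r x + (1 - r) λ ≤ x + λ`, so `φ ≤ λ^r` on `[0, ∞)`, and the isometric continuous
functional calculus turns this pointwise bound into the operator-norm bound `‖φ(L)‖ ≤ λ^r`.
-/

open scoped NNReal

theorem NNReal.mul_rpow_le_rpow_mul_add {r : ℝ} (hr0 : 0 ≤ r) (hr1 : r ≤ 1) (x μ : ℝ≥0) :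
    μ * x ^ r ≤ μ ^ r * (x + μ) := by
  lift r to ℝ≥0 using hr0
  have hr1' : r ≤ 1 := by exact_mod_cast hr1
  have amgm : x ^ (r : ℝ) * μ ^ ((1 - r : ℝ≥0) : ℝ) ≤ x + μ :=
    calc x ^ (r : ℝ) * μ ^ ((1 - r : ℝ≥0) : ℝ) ≤ r * x + (1 - r) * μ :=
          NNReal.geom_mean_le_arith_mean2_weighted _ _ _ _ (add_tsub_cancel_of_le hr1')
      _ ≤ x + μ := add_le_add (mul_le_of_le_one_left' hr1') (mul_le_of_le_one_left' tsub_le_self)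
  rcases eq_or_ne μ 0 with rfl | hμ
  · simp
  calc μ * x ^ (r : ℝ) = μ ^ (r : ℝ) * (x ^ (r : ℝ) * μ ^ ((1 - r : ℝ≥0) : ℝ)) := by
        rw [NNReal.coe_sub hr1', NNReal.coe_one, mul_left_comm, ← NNReal.rpow_add hμ,
          add_sub_cancel, NNReal.rpow_one, mul_comm]
    _ ≤ μ ^ (r : ℝ) * (x + μ) := mul_le_mul_right amgm _

namespace CFC

section Algebra

variable {A : Type*} [PartialOrder A] [Ring A] [StarRing A] [TopologicalSpace A]
  [StarOrderedRing A] [Algebra ℝ A] [ContinuousFunctionalCalculus ℝ A IsSelfAdjoint]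
  [NonnegSpectrumClass ℝ A]

theorem inverse_add_algebraMap_eq_cfc {a : A} (ha : 0 ≤ a) {μ : ℝ≥0} (hμ : 0 < μ) :
    Ring.inverse (a + algebraMap ℝ≥0 A μ) = cfc (fun x : ℝ≥0 => (x + μ)⁻¹) a := by
  rw [cfc_inv (fun x : ℝ≥0 => x + μ) a (fun x _ => (add_pos_of_nonneg_of_pos zero_le hμ).ne'),
    cfc_add_const μ (fun x : ℝ≥0 => x) a, cfc_id' ℝ≥0 a]

theorem rpow_sub_mul_inverse_add_mul_rpow {a : A} (ha : 0 ≤ a) {μ : ℝ≥0} (hμ : 0 < μ)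
    {r : ℝ} (hr : 0 ≤ r) :
    a ^ r - a * Ring.inverse (a + algebraMap ℝ≥0 A μ) * a ^ r =
      cfc (fun x : ℝ≥0 => μ * (x + μ)⁻¹ * x ^ r) a := by
  have hpow : Continuous fun x : ℝ≥0 => x ^ r := NNReal.continuous_rpow_const hr
  have hne (x : ℝ≥0) : x + μ ≠ 0 := (add_pos_of_nonneg_of_pos zero_le hμ).ne'
  have hinv : Continuous fun x : ℝ≥0 => (x + μ)⁻¹ :=
    (continuous_id.add continuous_const).inv₀ hne
  have split : cfc (fun x : ℝ≥0 => x ^ r) a =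
      cfc (fun x : ℝ≥0 => x * (x + μ)⁻¹ * x ^ r) a +
        cfc (fun x : ℝ≥0 => μ * (x + μ)⁻¹ * x ^ r) a := by
    rw [← cfc_add a (fun x : ℝ≥0 => x * (x + μ)⁻¹ * x ^ r) (fun x : ℝ≥0 => μ * (x + μ)⁻¹ * x ^ r)
      ((continuous_id.mul hinv).mul hpow).continuousOn
      ((continuous_const.mul hinv).mul hpow).continuousOn]
    refine cfc_congr fun x _ => ?_
    rw [← add_mul, ← add_mul, mul_inv_cancel₀ (hne x), one_mul]
  have factor : cfc (fun x : ℝ≥0 => x * (x + μ)⁻¹ * x ^ r) a =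
      a * Ring.inverse (a + algebraMap ℝ≥0 A μ) * a ^ r := by
    rw [cfc_mul (fun x : ℝ≥0 => x * (x + μ)⁻¹) (fun x : ℝ≥0 => x ^ r) a
        (continuous_id.mul hinv).continuousOn hpow.continuousOn,
      cfc_mul (fun x : ℝ≥0 => x) (fun x : ℝ≥0 => (x + μ)⁻¹) a
        continuous_id.continuousOn hinv.continuousOn,
      cfc_id' ℝ≥0 a, inverse_add_algebraMap_eq_cfc ha hμ, rpow_def]
  rw [sub_eq_iff_eq_add', ← factor, ← split, rpow_def]

end Algebra

variable {A : Type*} [NormedRing A] [StarRing A] [NormedAlgebra ℝ A] [PartialOrder A]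
  [StarOrderedRing A] [IsometricContinuousFunctionalCalculus ℝ A IsSelfAdjoint]
  [NonnegSpectrumClass ℝ A]

theorem norm_rpow_sub_mul_inverse_add_smul_mul_rpow_le {a : A} (ha : 0 ≤ a) {lam r : ℝ}
    (hlam : 0 < lam) (hr0 : 0 ≤ r) (hr1 : r ≤ 1) :
    ‖a ^ r - a * Ring.inverse (a + lam • 1) * a ^ r‖ ≤ lam ^ r := by
  lift lam to ℝ≥0 using hlam.le
  replace hlam : 0 < lam := mod_cast hlam
  rw [← NNReal.smul_def, ← Algebra.algebraMap_eq_smul_one,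
    rpow_sub_mul_inverse_add_mul_rpow ha hlam hr0, ← NNReal.coe_rpow]
  refine NNReal.coe_le_coe.2 (nnnorm_cfc_nnreal_le fun x _ => ?_)
  rw [mul_right_comm, ← div_eq_mul_inv, div_le_iff₀ (add_pos_of_nonneg_of_pos zero_le hlam)]
  exact NNReal.mul_rpow_le_rpow_mul_add hr0 hr1 x lam

end CFC

theorem stmt_17_general {H : Type*} [NormedAddCommGroup H] [InnerProductSpace ℂ H] [CompleteSpace H]
    (L : H →L[ℂ] H) (hL : L.IsPositive)
    (lam r : ℝ) (hlam : 0 < lam) (hr1 : 1 / 2 ≤ r) (hr2 : r ≤ 1) (g : H) :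
    ‖CFC.rpow L r g - (L * Ring.inverse (L + lam • (1 : H →L[ℂ] H))) (CFC.rpow L r g)‖ ≤
      lam ^ r * ‖g‖ := by
  have hL0 : 0 ≤ L := L.nonneg_iff_isPositive.2 hL
  calc ‖CFC.rpow L r g - (L * Ring.inverse (L + lam • (1 : H →L[ℂ] H))) (CFC.rpow L r g)‖
      = ‖(L ^ r - L * Ring.inverse (L + lam • 1) * L ^ r) g‖ := rfl
    _ ≤ ‖L ^ r - L * Ring.inverse (L + lam • 1) * L ^ r‖ * ‖g‖ :=
        ContinuousLinearMap.le_opNorm _ g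
    _ ≤ lam ^ r * ‖g‖ := by
      gcongr
      exact CFC.norm_rpow_sub_mul_inverse_add_smul_mul_rpow_le hL0 hlam (by linarith) hr2

/-- For a bounded positive self-adjoint `L`, `λ > 0`, `r ∈ [1/2,1]`, and `f = L^r g`:
`‖f - L(L+λI)⁻¹ f‖ ≤ λ^r ‖g‖`. -/
theorem stmt_17 {H : Type*} [NormedAddCommGroup H] [InnerProductSpace ℂ H] [CompleteSpace H]
    [TopologicalSpace.SeparableSpace H]
    (L : H →L[ℂ] H) (hL : L.IsPositive) (hsa : IsSelfAdjoint L)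
    (lam r : ℝ) (hlam : 0 < lam) (hr1 : 1 / 2 ≤ r) (hr2 : r ≤ 1) (g : H) :
    ‖CFC.rpow L r g - (L * Ring.inverse (L + lam • (1 : H →L[ℂ] H))) (CFC.rpow L r g)‖ ≤
      lam ^ r * ‖g‖ :=
  stmt_17_general L hL lam r hlam hr1 hr2 g
end
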